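/- arXiv:2408.09080 — 2 statements merged into one kernel-verified Lean document; each statement's English description precedes it below -/
import Mathlib

section
/- Every compatible relation R : 𝒜 → ℬ factors as an epimorphism followed by a monomorphism: with 𝒫 = pol(R) = (A⁻, B⁺; R), the same relation R is compatible as a morphism 𝒜 → 𝒫 and as a morphism 𝒫 → ℬ, the first is epi, the second is mono, and R = R ⨟_𝒫 R. -/
def down {A B : Type*} (R : A → B → Prop) (Y : Set B) : Set A := {a | ∀ b ∈ Y, R a b}
def up {A B : Type*} (R : A → B → Prop) (X : Set A) : Set B := {b | ∀ a ∈ X, R a b}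
def bracket {A B : Type*} (f : Set B → Set A) : A → B → Prop := fun a b => a ∈ f {b}
def Compat {Am Ap Bm Bp : Type*} (A : Am → Ap → Prop) (B : Bm → Bp → Prop)
    (R : Am → Bp → Prop) : Prop :=
  (∀ Y : Set Bp, down A (up A (down R Y)) = down R Y) ∧
  (∀ Y : Set Bp, down R (up B (down B Y)) = down R Y)
def comp {Am Bm Bp Cp : Type*} (R : Am → Bp → Prop) (B : Bm → Bp → Prop)
    (S : Bm → Cp → Prop) : Am → Cp → Prop :=
  fun a c => a ∈ down R (up B (down S {c}))

section Polarity

variable {Am Ap Bm Bp Zm Zp : Type*}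

-- `down` and `up` are Mathlib's `lowerPolar` and `upperPolar` by definition.
lemma down_up_down (R : Am → Bp → Prop) (Y : Set Bp) :
    down R (up R (down R Y)) = down R Y :=
  lowerPolar_upperPolar_lowerPolar R Y

lemma mem_down_singleton {R : Am → Bp → Prop} {a : Am} {b : Bp} :
    a ∈ down R {b} ↔ R a b :=
  mem_lowerPolar_singleton R

lemma Compat.pol_left {A : Am → Ap → Prop} {B : Bm → Bp → Prop} {R : Am → Bp → Prop}
    (hR : Compat A B R) : Compat A R R :=
  ⟨hR.1, down_up_down R⟩

lemma Compat.pol_right {A : Am → Ap → Prop} {B : Bm → Bp → Prop} {R : Am → Bp → Prop}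
    (hR : Compat A B R) : Compat R B R :=
  ⟨down_up_down R, hR.2⟩

lemma compat_self (R : Am → Bp → Prop) : Compat R R R :=
  ⟨down_up_down R, down_up_down R⟩

lemma comp_eq_of_compat_left {R : Am → Bp → Prop} {Z : Zm → Zp → Prop} {P : Am → Zp → Prop}
    (hP : Compat R Z P) : comp R R P = P := by
  funext a c
  simp only [comp, hP.1 {c}, mem_down_singleton]

lemma comp_eq_of_compat_right {R : Am → Bp → Prop} {Z : Zm → Zp → Prop} {P : Zm → Bp → Prop}
    (hP : Compat Z R P) : comp P R R = P := by
  funext a c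
  simp only [comp, hP.2 {c}, mem_down_singleton]

end Polarity

universe u
theorem stmt16 {Am Ap Bm Bp : Type u} (A : Am → Ap → Prop) (B : Bm → Bp → Prop)
    (R : Am → Bp → Prop) (hR : Compat A B R) :
    Compat A R R ∧ Compat R B R ∧
    (∀ (Zm Zp : Type u) (Z : Zm → Zp → Prop) (P Q : Am → Zp → Prop),
      Compat R Z P → Compat R Z Q → comp R R P = comp R R Q → P = Q) ∧
    (∀ (Zm Zp : Type u) (Z : Zm → Zp → Prop) (P Q : Zm → Bp → Prop),
      Compat Z R P → Compat Z R Q → comp P R R = comp Q R R → P = Q) ∧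
    comp R R R = R := by
  refine ⟨hR.pol_left, hR.pol_right, ?epi, ?mono, comp_eq_of_compat_left (compat_self R)⟩
  case epi =>
    intro Zm Zp Z P Q hP hQ h
    rwa [comp_eq_of_compat_left hP, comp_eq_of_compat_left hQ] at h
  case mono =>
    intro Zm Zp Z P Q hP hQ h
    rwa [comp_eq_of_compat_right hP, comp_eq_of_compat_right hQ] at h
end

section
/- The product of a family {𝒜ᵢ}ᵢ of polarities in Pol exists and is given by Π𝒜ᵢ whose lower set is the disjoint union Σᵢ Aᵢ⁻, whose upper set is the disjoint union Σᵢ Aᵢ⁺, with incidence (ⱼa) Π𝒜ᵢ (ₖα) iff (j = k implies a 𝒜ₖ α). The projections Pₖ ⊆ (Σᵢ Aᵢ⁻) × Aₖ⁺ defined by ⱼa Pₖ α iff (j = k implies a 𝒜ₖ α) are compatible relations, and for any polarity ℬ and compatible relations Rᵢ : ℬ → 𝒜ᵢ, the relation T defined by b T (ᵢα) iff b Rᵢ α is the unique compatible relation with T ⨟ Pₖ = Rₖ for all k. -/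
section Polars

variable {Am Ap : Type*} (A : Am → Ap → Prop)

lemma down_anti {Y Y' : Set Ap} (h : Y ⊆ Y') : down A Y' ⊆ down A Y :=
  fun _ ha b hb => ha b (h hb)

lemma up_anti {X X' : Set Am} (h : X ⊆ X') : up A X' ⊆ up A X :=
  fun _ hb a ha => hb a (h ha)

lemma subset_down_up (X : Set Am) : X ⊆ down A (up A X) :=
  fun _ ha _ hb => hb _ ha

lemma subset_up_down (Y : Set Ap) : Y ⊆ up A (down A Y) :=
  fun _ hb _ ha => ha _ hb

lemma down_up_down_s19 (Y : Set Ap) : down A (up A (down A Y)) = down A Y :=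
  (down_anti A (subset_up_down A Y)).antisymm (subset_down_up A (down A Y))

lemma mem_down_singleton_s19 {a : Am} {α : Ap} : a ∈ down A {α} ↔ A a α := by
  simp [down]

end Polars

section SigmaPolarity

variable {ι : Type*} {An Ap : ι → Type*} (A : ∀ i, An i → Ap i → Prop)

def sigmaRel : (Σ i, An i) → (Σ i, Ap i) → Prop :=
  fun x y => ∀ h : x.1 = y.1, A y.1 (h ▸ x.2) y.2

def sigmaProj (k : ι) : (Σ i, An i) → Ap k → Prop :=
  fun x α => ∀ h : x.1 = k, A k (h ▸ x.2) α

lemma preimage_down_sigmaRel (Z : Set (Σ i, Ap i)) (j : ι) :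
    Sigma.mk j ⁻¹' down (sigmaRel A) Z = down (A j) (Sigma.mk j ⁻¹' Z) := by
  ext a
  constructor
  · intro h α hα
    exact h ⟨j, α⟩ hα rfl
  · rintro h ⟨j', α⟩ hα (rfl : j = j')
    exact h α hα

lemma preimage_up_sigmaRel (X : Set (Σ i, An i)) (j : ι) :
    Sigma.mk j ⁻¹' up (sigmaRel A) X = up (A j) (Sigma.mk j ⁻¹' X) := by
  ext α
  constructor
  · intro h a ha
    exact h ⟨j, a⟩ ha rfl
  · rintro h ⟨j', a⟩ ha (rfl : j' = j)
    exact h a ha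

lemma preimage_up_down_sigmaRel (Z : Set (Σ i, Ap i)) (j : ι) :
    Sigma.mk j ⁻¹' up (sigmaRel A) (down (sigmaRel A) Z) =
      up (A j) (down (A j) (Sigma.mk j ⁻¹' Z)) := by
  rw [preimage_up_sigmaRel, preimage_down_sigmaRel]

lemma down_sigmaProj (k : ι) (Y : Set (Ap k)) :
    down (sigmaProj A k) Y = down (sigmaRel A) (Sigma.mk k '' Y) := by
  ext x
  constructor
  · rintro h _ ⟨α, hα, rfl⟩
    exact h α hα
  · intro h α hα
    exact h ⟨k, α⟩ ⟨α, hα, rfl⟩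

lemma mem_down_sigmaProj (k : ι) (Y : Set (Ap k)) (j : ι) (a : An j) :
    (⟨j, a⟩ : Σ i, An i) ∈ down (sigmaProj A k) Y ↔ ∀ h : j = k, h ▸ a ∈ down (A k) Y := by
  constructor
  · rintro h rfl α hα
    exact h α hα rfl
  · rintro h α hα rfl
    exact h rfl α hα

lemma compat_sigmaProj (k : ι) : Compat (sigmaRel A) (A k) (sigmaProj A k) := by
  refine ⟨fun Y => ?_, fun Y => ?_⟩
  · rw [down_sigmaProj, down_up_down_s19]
  · ext ⟨j, a⟩
    simp only [mem_down_sigmaProj, down_up_down_s19]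

lemma comp_sigmaProj {Bm : Type*} {T : Bm → (Σ i, Ap i) → Prop}
    (hT : ∀ Z, down T (up (sigmaRel A) (down (sigmaRel A) Z)) = down T Z) (k : ι) :
    comp T (sigmaRel A) (sigmaProj A k) = fun b α => T b ⟨k, α⟩ := by
  funext b α
  simp only [comp, down_sigmaProj, Set.image_singleton, hT, mem_down_singleton_s19]

variable {Bm Bp : Type*} {A}

def sigmaLift (R : ∀ i, Bm → Ap i → Prop) : Bm → (Σ i, Ap i) → Prop :=
  fun b y => R y.1 b y.2

lemma down_sigmaLift (R : ∀ i, Bm → Ap i → Prop) (Z : Set (Σ i, Ap i)) :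
    down (sigmaLift R) Z = ⋂ j, down (R j) (Sigma.mk j ⁻¹' Z) := by
  ext b
  simp only [Set.mem_iInter]
  exact ⟨fun h j α hα => h ⟨j, α⟩ hα, fun h ⟨j, α⟩ hα => h j α hα⟩

lemma compat_sigmaLift (B : Bm → Bp → Prop) {R : ∀ i, Bm → Ap i → Prop}
    (hR : ∀ i, Compat B (A i) (R i)) : Compat B (sigmaRel A) (sigmaLift R) := by
  refine ⟨fun Z => ?_, fun Z => ?_⟩
  · rw [down_sigmaLift]
    refine (Set.subset_iInter fun j => ?_).antisymm (subset_down_up B _)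
    -- each fibre polar of `R j` is `B`-closed, hence so is their intersection
    rw [← (hR j).1]
    exact down_anti B (up_anti B (Set.iInter_subset _ j))
  · simp only [down_sigmaLift, preimage_up_down_sigmaRel, (hR _).2]

end SigmaPolarity

theorem stmt19 {ι : Type*} {An Ap : ι → Type*} (A : ∀ i, An i → Ap i → Prop)
    {Bm Bp : Type*} (B : Bm → Bp → Prop) :
    let PA : (Σ i, An i) → (Σ i, Ap i) → Prop :=
      fun x y => ∀ h : x.1 = y.1, A y.1 (h ▸ x.2) y.2
    let proj : ∀ k, (Σ i, An i) → Ap k → Prop :=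
      fun k x α => ∀ h : x.1 = k, A k (h ▸ x.2) α
    (∀ k, Compat PA (A k) (proj k)) ∧
    ∀ R : ∀ i, Bm → Ap i → Prop, (∀ i, Compat B (A i) (R i)) →
      let T : Bm → (Σ i, Ap i) → Prop := fun b y => R y.1 b y.2
      Compat B PA T ∧ (∀ k, comp T PA (proj k) = R k) ∧
      (∀ T' : Bm → (Σ i, Ap i) → Prop, Compat B PA T' →
        (∀ k, comp T' PA (proj k) = R k) → T' = T) := by
  intro PA proj
  refine ⟨compat_sigmaProj A, fun R hR => ?_⟩
  have hT : Compat B PA (sigmaLift R) := compat_sigmaLift B hR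
  refine ⟨hT, fun k => comp_sigmaProj A hT.2 k, fun T' hT' hfactor => ?_⟩
  funext b ⟨k, α⟩
  exact congrFun₂ ((comp_sigmaProj A hT'.2 k).symm.trans (hfactor k)) b α
end
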